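/- arXiv:1406.1956 — 5 statements merged into one kernel-verified Lean document; each statement's English description precedes it below -/
import Mathlib

section
/- Garsia–Rodemich–Rumsey inequality: for every p > 0 and θ > 1/p there exists a constant C_{p,θ} > 0 such that for every T > 0 and every continuous function f : [0,T] → ℝ, sup_{0 ≤ s < t ≤ T} |f(t) − f(s)| / (t−s)^{θ − 1/p} ≤ C_{p,θ} ( ∫₀ᵀ ∫₀ᵀ |f(x) − f(y)|^p / |x − y|^{θp + 1} dx dy )^{1/p}. -/
/-!
Let `Φ x y = |g x - g y| ^ p`. On an interval of length `L` the double integral of `Φ` is at most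
`J * L ^ (θ * p + 1)`, where `J` is the double integral on the right-hand side. Halve `[s, t]`
repeatedly towards `s` (resp. `t`), getting intervals `Kₙ` of length `(t - s) / 2 ^ n`. Picking
points below the mean (first moment method) gives `uₙ ∈ Kₙ` with
`Φ uₙ uₙ₊₁ * |Kₙ| * |Kₙ₊₁| ≤ 4 * J * |Kₙ| ^ (θ * p + 1)`, that is
`|g uₙ - g uₙ₊₁| ≤ (8 * J) ^ (1 / p) * |Kₙ| ^ (θ - 1 / p)`. Because `θ > 1 / p` these
increments decay geometrically, so both `|g u₀ - g s|` and `|g u₀ - g t|` are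
`O(J ^ (1 / p) * (t - s) ^ (θ - 1 / p))` once the common starting point `u₀` is good for both
chains. Only points below the mean are used, never Jensen's inequality, which is why every `p > 0`
is allowed.
-/

open Real MeasureTheory Set Filter
open scoped ENNReal Topology

section FirstMoment

variable {α : Type*} [MeasurableSpace α] {μ : Measure α}

/-- Take a point where `f / A + g / B`, whose mean over `S` is at most `2 / μ S`, lies below its
mean. -/
theorem exists_mem_mul_le_two_mul_of_setLIntegral_le {S : Set α} (hS₀ : μ S ≠ 0)
    (hS : μ S ≠ ⊤) {f g : α → ℝ≥0∞} (hf : Measurable f) (hg : Measurable g) {A B : ℝ≥0∞}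
    (hfA : ∫⁻ x in S, f x ∂μ ≤ A) (hgB : ∫⁻ x in S, g x ∂μ ≤ B) :
    ∃ x ∈ S, f x * μ S ≤ 2 * A ∧ g x * μ S ≤ 2 * B := by
  set F : α → ℝ≥0∞ := fun x => f x / A + g x / B
  have hF : ∫⁻ x in S, F x ∂μ ≤ 2 :=
    calc ∫⁻ x in S, F x ∂μ = (∫⁻ x in S, f x ∂μ) / A + (∫⁻ x in S, g x ∂μ) / B := by
          simp only [F, div_eq_mul_inv]
          rw [lintegral_add_left (hf.mul_const _), lintegral_mul_const _ hf,
            lintegral_mul_const _ hg]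
      _ ≤ A / A + B / B := by gcongr
      _ ≤ 2 := (add_le_add ENNReal.div_self_le_one ENNReal.div_self_le_one).trans_eq
          one_add_one_eq_two
  obtain ⟨x, hxS, hx⟩ := nonempty_of_measure_ne_zero
    (measure_le_setLAverage_pos hS₀ hS ((hf.div_const A).add (hg.div_const B)).aemeasurable).ne'
  rw [setLAverage_eq, ENNReal.le_div_iff_mul_le (.inl hS₀) (.inl hS)] at hx
  have key : ∀ {h : α → ℝ≥0∞} {C : ℝ≥0∞}, h x / C ≤ F x → h x * μ S ≤ 2 * C := fun hle => by
    rw [← ENNReal.div_le_iff_le_mul (.inr ENNReal.ofNat_ne_top) (.inr two_ne_zero),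
      ENNReal.mul_div_right_comm]
    exact (mul_le_mul_left hle _).trans (hx.trans hF)
  exact ⟨x, hxS, key le_self_add, key le_add_self⟩

variable [SFinite μ]

theorem exists_seq_mul_le_of_setLIntegral_le {Φ : α → α → ℝ≥0∞}
    (hΦ : Measurable (Function.uncurry Φ)) {K : ℕ → Set α} (hK₀ : ∀ n, μ (K n) ≠ 0)
    (hK : ∀ n, μ (K n) ≠ ⊤) {B : ℕ → ℝ≥0∞}
    (hB : ∀ n, ∫⁻ x in K n, ∫⁻ y in K (n + 1), Φ x y ∂μ ∂μ ≤ B n) {x₀ : α} (hx₀ : x₀ ∈ K 0)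
    (hx₀B : (∫⁻ y in K 1, Φ x₀ y ∂μ) * μ (K 0) ≤ 2 * B 0) :
    ∃ u : ℕ → α, u 0 = x₀ ∧ (∀ n, u n ∈ K n) ∧
      ∀ n, Φ (u n) (u (n + 1)) * (μ (K n) * μ (K (n + 1))) ≤ 4 * B n := by
  let good (n : ℕ) (x : α) : Prop :=
    x ∈ K n ∧ (∫⁻ y in K (n + 1), Φ x y ∂μ) * μ (K n) ≤ 2 * B n
  have step : ∀ n x, good n x →
      ∃ y, good (n + 1) y ∧ Φ x y * (μ (K n) * μ (K (n + 1))) ≤ 4 * B n := by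
    rintro n x ⟨-, hx⟩
    rw [← ENNReal.le_div_iff_mul_le (.inl (hK₀ n)) (.inl (hK n))] at hx
    obtain ⟨y, hyK, hy, hxy⟩ := exists_mem_mul_le_two_mul_of_setLIntegral_le (hK₀ (n + 1))
      (hK (n + 1)) hΦ.lintegral_prod_right' (hΦ.comp measurable_prodMk_left) (hB (n + 1)) hx
    refine ⟨y, ⟨hyK, hy⟩, ?_⟩
    calc Φ x y * (μ (K n) * μ (K (n + 1))) = Φ x y * μ (K (n + 1)) * μ (K n) := by ring
      _ ≤ 2 * (2 * B n / μ (K n)) * μ (K n) := mul_le_mul_left hxy _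
      _ = 4 * B n := by
        rw [mul_assoc, ENNReal.div_mul_cancel (hK₀ n) (hK n), ← mul_assoc]
        norm_num
  choose next hnext hnext_le using step
  let u : (n : ℕ) → {x // good n x} :=
    fun n => Nat.rec ⟨x₀, hx₀, hx₀B⟩ (fun m x => ⟨next m x.1 x.2, hnext m x.1 x.2⟩) n
  exact ⟨fun n => (u n).1, rfl, fun n => (u n).2.1, fun n => hnext_le n _ (u n).2⟩

end FirstMoment

theorem setLIntegral_setLIntegral_rpow_le {f : ℝ → ℝ} {p q L : ℝ} (hp : 0 < p) (hq : 0 ≤ q)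
    {S U : Set ℝ} (hS : MeasurableSet S) (hSU : S ⊆ U) (hL : ∀ x ∈ S, ∀ y ∈ S, |x - y| ≤ L) :
    ∫⁻ x in S, ∫⁻ y in S, ENNReal.ofReal (|f x - f y| ^ p) ≤
      ENNReal.ofReal (L ^ q) *
        ∫⁻ x in U, ∫⁻ y in U, ENNReal.ofReal (|f x - f y| ^ p / |x - y| ^ q) := by
  have hpt : ∀ x ∈ S, ∀ y ∈ S, |f x - f y| ^ p ≤ L ^ q * (|f x - f y| ^ p / |x - y| ^ q) := by
    intro x hx y hy
    rcases eq_or_ne x y with rfl | hxy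
    · simp [zero_rpow hp.ne']
    have hd : 0 < |x - y| := abs_pos.mpr (sub_ne_zero.mpr hxy)
    calc |f x - f y| ^ p = |x - y| ^ q * (|f x - f y| ^ p / |x - y| ^ q) := by field_simp
      _ ≤ L ^ q * (|f x - f y| ^ p / |x - y| ^ q) := by
          gcongr
          exact hL x hx y hy
  calc ∫⁻ x in S, ∫⁻ y in S, ENNReal.ofReal (|f x - f y| ^ p)
      ≤ ∫⁻ x in S, ∫⁻ y in S,
          ENNReal.ofReal (L ^ q) * ENNReal.ofReal (|f x - f y| ^ p / |x - y| ^ q) := by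
        refine setLIntegral_mono' hS fun x hx => setLIntegral_mono' hS fun y hy => ?_
        have hL₀ : 0 ≤ L := (abs_nonneg _).trans (hL x hx x hx)
        rw [← ENNReal.ofReal_mul (by positivity)]
        exact ENNReal.ofReal_le_ofReal (hpt x hx y hy)
    _ = ENNReal.ofReal (L ^ q) *
          ∫⁻ x in S, ∫⁻ y in S, ENNReal.ofReal (|f x - f y| ^ p / |x - y| ^ q) := by
        simp only [lintegral_const_mul' _ _ ENNReal.ofReal_ne_top]
    _ ≤ _ := by gcongr

theorem le_of_rpow_mul_half_le {p θ a J L : ℝ} (hp : 0 < p) (ha : 0 ≤ a) (hJ : 0 ≤ J)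
    (hL : 0 < L) (h : a ^ p * (L * (L / 2)) ≤ 4 * (J * L ^ (θ * p + 1))) :
    a ≤ (8 * J) ^ (1 / p) * L ^ (θ - 1 / p) := by
  have hsplit : L ^ (θ * p + 1) = L ^ (θ * p - 1) * L ^ 2 := by
    rw [← rpow_natCast, ← rpow_add hL]
    ring_nf
  have hap : a ^ p ≤ 8 * J * L ^ (θ * p - 1) := by
    rw [hsplit] at h
    have hL2 : 0 < L ^ 2 := by positivity
    nlinarith
  calc a = (a ^ p) ^ (1 / p) := by rw [← rpow_mul ha, mul_one_div_cancel hp.ne', rpow_one]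
    _ ≤ (8 * J * L ^ (θ * p - 1)) ^ (1 / p) := by gcongr
    _ = (8 * J) ^ (1 / p) * L ^ (θ - 1 / p) := by
      rw [mul_rpow (by positivity) (by positivity), ← rpow_mul hL.le]
      congr 2
      field_simp

theorem div_two_pow_rpow {ℓ : ℝ} (hℓ : 0 ≤ ℓ) (κ : ℝ) (n : ℕ) :
    (ℓ / 2 ^ n) ^ κ = ℓ ^ κ * ((1 / 2) ^ κ) ^ n := by
  rw [rpow_pow_comm (by norm_num), div_eq_mul_one_div ℓ, one_div_pow,
    mul_rpow hℓ (by positivity)]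

noncomputable def garsiaRodemichRumseyConst (p θ : ℝ) : ℝ :=
  2 * 8 ^ (1 / p) / (1 - (1 / 2) ^ (θ - 1 / p))

theorem garsiaRodemichRumseyConst_pos {p θ : ℝ} (hθ : 1 / p < θ) :
    0 < garsiaRodemichRumseyConst p θ := by
  have hr : (1 / 2 : ℝ) ^ (θ - 1 / p) < 1 :=
    rpow_lt_one (by norm_num) (by norm_num) (sub_pos.mpr hθ)
  have h8 : (0 : ℝ) < 8 ^ (1 / p) := by positivity
  unfold garsiaRodemichRumseyConst
  apply div_pos <;> linarith

section Chain

variable {p θ : ℝ} {g : ℝ → ℝ}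

theorem abs_sub_le_of_dyadic_chain {J ℓ τ x₀ : ℝ} (hp : 0 < p) (hθ : 1 / p < θ) (hJ : 0 ≤ J)
    (hg : Continuous g) (hℓ : 0 < ℓ) {a b : ℕ → ℝ} (hlen : ∀ n, b n - a n = ℓ / 2 ^ n)
    (hanti : ∀ n, Icc (a (n + 1)) (b (n + 1)) ⊆ Icc (a n) (b n))
    (hτ : ∀ n, τ ∈ Icc (a n) (b n))
    (hbound : ∀ n, ∫⁻ x in Icc (a n) (b n), ∫⁻ y in Icc (a n) (b n),
      ENNReal.ofReal (|g x - g y| ^ p) ≤ ENNReal.ofReal (J * (ℓ / 2 ^ n) ^ (θ * p + 1)))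
    (hx₀ : x₀ ∈ Icc (a 0) (b 0))
    (hx₀B : (∫⁻ y in Icc (a 1) (b 1), ENNReal.ofReal (|g x₀ - g y| ^ p)) * ENNReal.ofReal ℓ ≤
      2 * ENNReal.ofReal (J * ℓ ^ (θ * p + 1))) :
    |g x₀ - g τ| ≤ (8 * J) ^ (1 / p) * ℓ ^ (θ - 1 / p) / (1 - (1 / 2) ^ (θ - 1 / p)) := by
  have hvol : ∀ n, volume (Icc (a n) (b n)) = ENNReal.ofReal (ℓ / 2 ^ n) := by
    simp [hlen]
  have hΦ : Measurable (Function.uncurry fun x y => ENNReal.ofReal (|g x - g y| ^ p)) := by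
    have := hg.measurable
    fun_prop
  obtain ⟨u, rfl, hu, huB⟩ := exists_seq_mul_le_of_setLIntegral_le hΦ
    (K := fun n => Icc (a n) (b n)) (fun n => by simp [hvol, hℓ]) (fun n => by simp [hvol])
    (fun n => (lintegral_mono fun x => lintegral_mono_set (hanti n)).trans (hbound n)) hx₀
    (by simpa [hvol] using hx₀B)
  have hinc : ∀ n, dist (g (u n)) (g (u (n + 1))) ≤
      (8 * J) ^ (1 / p) * ℓ ^ (θ - 1 / p) * ((1 / 2) ^ (θ - 1 / p)) ^ n := by
    intro n
    have hLn : 0 < ℓ / 2 ^ n := by positivity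
    have h := huB n
    rw [hvol, hvol, pow_succ, ← div_div, ← ENNReal.ofReal_mul hLn.le,
      ← ENNReal.ofReal_mul (by positivity), ← ENNReal.ofReal_ofNat,
      ← ENNReal.ofReal_mul (by norm_num), ENNReal.ofReal_le_ofReal_iff (by positivity)] at h
    rw [Real.dist_eq, mul_assoc, ← div_two_pow_rpow hℓ.le]
    exact le_of_rpow_mul_half_le hp (abs_nonneg _) hJ hLn h
  have hlim : Tendsto u atTop (𝓝 τ) := by
    refine tendsto_iff_dist_tendsto_zero.mpr (squeeze_zero (fun _ => dist_nonneg)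
      (fun n => (Real.dist_le_of_mem_Icc (hu n) (hτ n)).trans_eq (hlen n)) ?_)
    exact tendsto_const_nhds.div_atTop (tendsto_pow_atTop_atTop_of_one_lt one_lt_two)
  simpa [Real.dist_eq] using dist_le_of_le_geometric_of_tendsto₀ _ _
    (rpow_lt_one (by norm_num) (by norm_num) (sub_pos.mpr hθ)) hinc ((hg.tendsto τ).comp hlim)

theorem abs_sub_le_of_forall_Icc_subset {J s t : ℝ} (hp : 0 < p) (hθ : 1 / p < θ) (hJ : 0 ≤ J)
    (hg : Continuous g) (hst : s < t)
    (hbound : ∀ a b, a ≤ b → Icc a b ⊆ Icc s t → ∫⁻ x in Icc a b, ∫⁻ y in Icc a b,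
      ENNReal.ofReal (|g x - g y| ^ p) ≤ ENNReal.ofReal (J * (b - a) ^ (θ * p + 1))) :
    |g t - g s| ≤ garsiaRodemichRumseyConst p θ * J ^ (1 / p) * (t - s) ^ (θ - 1 / p) := by
  set ℓ := t - s
  have hℓ : 0 < ℓ := sub_pos.mpr hst
  have hpos : ∀ n : ℕ, 0 < ℓ / 2 ^ n := fun n => by positivity
  have hhalf : ∀ n : ℕ, ℓ / 2 ^ (n + 1) ≤ ℓ / 2 ^ n := fun n =>
    div_le_div_of_nonneg_left hℓ.le (by positivity) (pow_le_pow_right₀ one_le_two n.le_succ)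
  have hle : ∀ n : ℕ, ℓ / 2 ^ n ≤ ℓ := fun n => div_le_self hℓ.le (one_le_pow₀ one_le_two)
  have hleft : ∀ n : ℕ, Icc s (s + ℓ / 2 ^ n) ⊆ Icc s t := fun n =>
    Icc_subset_Icc le_rfl (by linarith [hle n])
  have hright : ∀ n : ℕ, Icc (t - ℓ / 2 ^ n) t ⊆ Icc s t := fun n =>
    Icc_subset_Icc (by linarith [hle n]) le_rfl
  have hΦ : Measurable (Function.uncurry fun x y => ENNReal.ofReal (|g x - g y| ^ p)) := by
    have := hg.measurable
    fun_prop
  have hwhole := hbound s t hst.le le_rfl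
  obtain ⟨x₀, hx₀, hx₀l, hx₀r⟩ := exists_mem_mul_le_two_mul_of_setLIntegral_le (μ := volume)
    (by simp [hst]) (by simp) hΦ.lintegral_prod_right' hΦ.lintegral_prod_right'
    ((lintegral_mono fun x => lintegral_mono_set (hleft 1)).trans hwhole)
    ((lintegral_mono fun x => lintegral_mono_set (hright 1)).trans hwhole)
  rw [Real.volume_Icc] at hx₀l hx₀r
  have hl := abs_sub_le_of_dyadic_chain hp hθ hJ hg hℓ (a := fun _ => s)
    (b := fun n => s + ℓ / 2 ^ n) (τ := s) (fun n => by simp)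
    (fun n => Icc_subset_Icc le_rfl (by linarith [hhalf n]))
    (fun n => ⟨le_rfl, by linarith [hpos n]⟩)
    (fun n => by simpa using hbound _ _ (by linarith [hpos n]) (hleft n))
    (by simpa [ℓ] using hx₀) hx₀l
  have hr := abs_sub_le_of_dyadic_chain hp hθ hJ hg hℓ (a := fun n => t - ℓ / 2 ^ n)
    (b := fun _ => t) (τ := t) (fun n => by simp)
    (fun n => Icc_subset_Icc (by linarith [hhalf n]) le_rfl)
    (fun n => ⟨by linarith [hpos n], le_rfl⟩)
    (fun n => by simpa using hbound _ _ (by linarith [hpos n]) (hright n))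
    (by simpa [ℓ] using hx₀) hx₀r
  calc |g t - g s| ≤ |g x₀ - g t| + |g x₀ - g s| := by
        rw [abs_sub_comm (g x₀)]
        exact abs_sub_le _ _ _
    _ ≤ _ := add_le_add hr hl
    _ = _ := by
      rw [garsiaRodemichRumseyConst, mul_rpow (by norm_num) hJ]
      ring

theorem ofReal_div_rpow_le_of_Icc_subset {s t : ℝ} (hp : 0 < p) (hθ : 1 / p < θ)
    (hg : Continuous g) (hst : s < t) {U : Set ℝ} (hU : Icc s t ⊆ U) :
    ENNReal.ofReal (|g t - g s| / (t - s) ^ (θ - 1 / p)) ≤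
      ENNReal.ofReal (garsiaRodemichRumseyConst p θ) *
        (∫⁻ x in U, ∫⁻ y in U, ENNReal.ofReal (|g x - g y| ^ p / |x - y| ^ (θ * p + 1))) ^
          (1 / p) := by
  set I := ∫⁻ x in U, ∫⁻ y in U, ENNReal.ofReal (|g x - g y| ^ p / |x - y| ^ (θ * p + 1))
  have hC := garsiaRodemichRumseyConst_pos hθ
  rcases eq_or_ne I ⊤ with hI | hI
  · rw [hI, ENNReal.top_rpow_of_pos (one_div_pos.mpr hp), ENNReal.mul_top (by simpa using hC)]
    exact le_top
  have hq : 0 ≤ θ * p + 1 := by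
    have := (div_lt_iff₀ hp).mp hθ
    linarith
  have hbound : ∀ a b, a ≤ b → Icc a b ⊆ Icc s t → ∫⁻ x in Icc a b, ∫⁻ y in Icc a b,
      ENNReal.ofReal (|g x - g y| ^ p) ≤ ENNReal.ofReal (I.toReal * (b - a) ^ (θ * p + 1)) := by
    intro a b hab hsub
    calc _ ≤ ENNReal.ofReal ((b - a) ^ (θ * p + 1)) * I :=
          setLIntegral_setLIntegral_rpow_le hp hq measurableSet_Icc (hsub.trans hU)
            fun x hx y hy => Real.dist_le_of_mem_Icc hx hy
      _ = _ := by
          rw [mul_comm, ENNReal.ofReal_mul ENNReal.toReal_nonneg, ENNReal.ofReal_toReal hI]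
  have hts : 0 < (t - s) ^ (θ - 1 / p) := rpow_pos_of_pos (sub_pos.mpr hst) _
  calc ENNReal.ofReal (|g t - g s| / (t - s) ^ (θ - 1 / p))
      ≤ ENNReal.ofReal (garsiaRodemichRumseyConst p θ * I.toReal ^ (1 / p)) := by
        refine ENNReal.ofReal_le_ofReal ((div_le_iff₀ hts).mpr ?_)
        exact abs_sub_le_of_forall_Icc_subset hp hθ ENNReal.toReal_nonneg hg hst hbound
    _ = _ := by
        rw [ENNReal.ofReal_mul hC.le, ← ENNReal.ofReal_rpow_of_nonneg ENNReal.toReal_nonneg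
          (one_div_pos.mpr hp).le, ENNReal.ofReal_toReal hI]

end Chain

/-- Garsia–Rodemich–Rumsey inequality. The right-hand side (a lower Lebesgue integral in
`ℝ≥0∞`) is allowed to be infinite, in which case the inequality holds trivially. -/
theorem garsia_rodemich_rumsey (p θ : ℝ) (hp : 0 < p) (hθ : 1/p < θ) :
    ∃ C : ℝ, 0 < C ∧ ∀ T : ℝ, 0 < T → ∀ f : ℝ → ℝ, ContinuousOn f (Set.Icc 0 T) →
      ∀ s t : ℝ, 0 ≤ s → s < t → t ≤ T →
        ENNReal.ofReal (|f t - f s| / (t - s) ^ (θ - 1/p)) ≤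
          ENNReal.ofReal C *
            (∫⁻ x in Set.Icc (0:ℝ) T, ∫⁻ y in Set.Icc (0:ℝ) T,
              ENNReal.ofReal (|f x - f y| ^ p / |x - y| ^ (θ * p + 1))) ^ (1/p) := by
  refine ⟨garsiaRodemichRumseyConst p θ, garsiaRodemichRumseyConst_pos hθ,
    fun T hT f hf s t hs hst htT => ?_⟩
  set g : ℝ → ℝ := fun x => f (projIcc 0 T hT.le x)
  have hg : Continuous g := hf.comp_continuous (continuous_subtype_val.comp continuous_projIcc)
    fun x => (projIcc 0 T hT.le x).2
  have hgf : EqOn g f (Icc 0 T) := fun x hx => by simp [g, projIcc_of_mem hT.le hx]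
  have hsT : Icc s t ⊆ Icc 0 T := Icc_subset_Icc hs htT
  have hI : ∫⁻ x in Icc 0 T, ∫⁻ y in Icc 0 T,
        ENNReal.ofReal (|f x - f y| ^ p / |x - y| ^ (θ * p + 1)) =
      ∫⁻ x in Icc 0 T, ∫⁻ y in Icc 0 T,
        ENNReal.ofReal (|g x - g y| ^ p / |x - y| ^ (θ * p + 1)) :=
    setLIntegral_congr_fun measurableSet_Icc fun x hx =>
      setLIntegral_congr_fun measurableSet_Icc fun y hy => by rw [hgf hx, hgf hy]
  rw [hI, ← hgf (hsT ⟨le_rfl, hst.le⟩), ← hgf (hsT ⟨hst.le, le_rfl⟩)]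
  exact ofReal_div_rpow_le_of_Icc_subset hp hθ hg hst hsT
end

section
/- Let H ∈ (0,1) and 0 ≤ s < t. Then ∫_ℝ ((t−x)₊^{H−1/2} − (s−x)₊^{H−1/2})² dx = (t−s)^{2H} · ( 1/(2H) + ∫₀^∞ ((x+1)^{H−1/2} − x^{H−1/2})² dx ), where y₊ = max(y,0). (Variogram identity for the Mandelbrot–van Ness moving-average kernel.) -/
open Real MeasureTheory Set

private lemma mvn_sq_rpow {b : ℝ} (hb : 0 ≤ b) (a : ℝ) : (b ^ a) ^ 2 = b ^ (a * 2) := by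
  rw [← Real.rpow_natCast (b ^ a) 2, ← Real.rpow_mul hb]
  norm_num

private lemma mvn_bound {a : ℝ} (ha : a < 1) {x : ℝ} (hx : 1 ≤ x) :
    |(x + 1) ^ a - x ^ a| ≤ |a| * x ^ (a - 1) := by
  have hx0 : (0:ℝ) < x := by linarith
  obtain ⟨μ, hμ, hμeq⟩ := exists_hasDerivAt_eq_slope (fun y : ℝ => y ^ a)
    (fun y : ℝ => a * y ^ (a - 1)) (by linarith : x < x + 1)
    (fun y hy => (Real.continuousAt_rpow_const y a
      (Or.inl (by rintro rfl; simp at hy; linarith [hy.1]))).continuousWithinAt)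
    (fun y hy => Real.hasDerivAt_rpow_const (Or.inl (by rintro rfl; simp at hy; linarith [hy.1])))
  have hμ0 : (0:ℝ) < μ := by linarith [hμ.1]
  rw [show x + 1 - x = 1 by ring, div_one] at hμeq
  rw [← hμeq, abs_mul]
  gcongr
  rw [abs_of_nonneg (Real.rpow_nonneg hμ0.le _)]
  exact Real.rpow_le_rpow_of_nonpos hx0 hμ.1.le (by linarith)

private lemma mvn_integrable {a : ℝ} (ha1 : -(1/2) < a) (ha2 : a < 1/2) :
    IntegrableOn (fun x : ℝ => ((x + 1) ^ a - x ^ a) ^ 2) (Ioi 0) := by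
  have h2a : (-1:ℝ) < a * 2 := by linarith
  have hcont : ∀ (S : Set ℝ), (∀ x ∈ S, 0 < x) →
      ContinuousOn (fun x : ℝ => ((x + 1) ^ a - x ^ a) ^ 2) S := by
    intro S hS
    apply ContinuousOn.pow
    apply ContinuousOn.sub
    · apply ContinuousOn.rpow_const (by fun_prop)
      intro x hx
      have hx0 := hS x hx
      exact Or.inl (by positivity : (0:ℝ) < x + 1).ne'
    · exact continuousOn_id.rpow_const (fun x hx => Or.inl (hS x hx).ne')
  have hIoc : IntegrableOn (fun x : ℝ => ((x + 1) ^ a - x ^ a) ^ 2) (Ioc 0 1) := by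
    have hx2 : IntegrableOn (fun x : ℝ => (x ^ a) ^ 2) (Ioc 0 1) := by
      have := (intervalIntegral.intervalIntegrable_rpow' (a := 0) (b := 1) h2a)
      rw [intervalIntegrable_iff_integrableOn_Ioc_of_le (by norm_num)] at this
      exact this.congr_fun (fun x hx => (mvn_sq_rpow hx.1.le a).symm) measurableSet_Ioc
    have hb1 : IntegrableOn (fun x : ℝ => ((x + 1) ^ a) ^ 2) (Ioc 0 1) := by
      apply ContinuousOn.integrableOn_Icc (a := (0:ℝ)) (b := 1) _ |>.mono_set Ioc_subset_Icc_self
      apply ContinuousOn.pow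
      apply ContinuousOn.rpow_const (by fun_prop)
      intro x hx
      have hx0 := hx.1
      exact Or.inl (by positivity : (0:ℝ) < x + 1).ne'
    apply Integrable.mono' ((hb1.const_mul 2).add (hx2.const_mul 2))
    · exact (hcont _ (fun x hx => hx.1)).aestronglyMeasurable measurableSet_Ioc
    · refine (ae_restrict_iff' measurableSet_Ioc).2 (ae_of_all _ fun x hx => ?_)
      simp only [Pi.add_apply]
      rw [Real.norm_eq_abs, abs_of_nonneg (sq_nonneg _)]
      nlinarith [sq_nonneg ((x + 1) ^ a + x ^ a)]
  have hIoi : IntegrableOn (fun x : ℝ => ((x + 1) ^ a - x ^ a) ^ 2) (Ioi 1) := by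
    have hbi : IntegrableOn (fun x : ℝ => a ^ 2 * x ^ ((a - 1) * 2)) (Ioi 1) :=
      (integrableOn_Ioi_rpow_of_lt (by linarith) one_pos).const_mul _
    apply Integrable.mono' hbi
    · exact (hcont _ (fun x hx => by simp only [mem_Ioi] at hx; linarith)).aestronglyMeasurable
        measurableSet_Ioi
    · refine (ae_restrict_iff' measurableSet_Ioi).2 (ae_of_all _ fun x hx => ?_)
      simp only [mem_Ioi] at hx
      have hx0 : (0:ℝ) < x := by linarith
      rw [Real.norm_eq_abs, abs_of_nonneg (sq_nonneg _), ← sq_abs]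
      calc |(x + 1) ^ a - x ^ a| ^ 2 ≤ (|a| * x ^ (a - 1)) ^ 2 := by
            exact pow_le_pow_left₀ (abs_nonneg _) (mvn_bound (by linarith) hx.le) 2
        _ = a ^ 2 * x ^ ((a - 1) * 2) := by
            rw [mul_pow, sq_abs, mvn_sq_rpow hx0.le]
  have := hIoc.union hIoi
  rwa [Ioc_union_Ioi_eq_Ioi (by norm_num : (0:ℝ) ≤ 1)] at this

/-- Variogram identity for the Mandelbrot–van Ness moving-average kernel:
`∫_ℝ ((t-x)₊^(H-1/2) - (s-x)₊^(H-1/2))² dx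
  = (t-s)^(2H) * (1/(2H) + ∫₀^∞ ((x+1)^(H-1/2) - x^(H-1/2))² dx)`,
where `y₊^a = y^a` if `y > 0` and `0` otherwise. -/
theorem mandelbrot_van_ness_variogram (H : ℝ) (hH : H ∈ Set.Ioo (0:ℝ) 1)
    (s t : ℝ) (hs : 0 ≤ s) (hst : s < t) :
    (∫ x : ℝ, ((if 0 < t - x then (t - x) ^ (H - 1/2) else 0) -
        (if 0 < s - x then (s - x) ^ (H - 1/2) else 0)) ^ 2) =
      (t - s) ^ (2*H) *
        (1/(2*H) + ∫ x in Set.Ioi (0:ℝ), ((x+1) ^ (H - 1/2) - x ^ (H - 1/2)) ^ 2) := by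
  obtain ⟨hH0, hH1⟩ := hH
  set a : ℝ := H - 1/2 with ha
  set c : ℝ := t - s with hc
  have h2H : a * 2 + 1 = 2 * H := by rw [ha]; ring
  clear_value a
  have ha1 : -(1/2) < a := by rw [ha]; linarith
  have ha2 : a < 1/2 := by rw [ha]; linarith
  have hc0 : (0:ℝ) < c := by rw [hc]; linarith
  have hc' : c = t - s := hc
  clear_value c
  set F : ℝ → ℝ := fun y => ((if 0 < t - y then (t - y) ^ a else 0) -
      (if 0 < s - y then (s - y) ^ a else 0)) ^ 2 with hF
  set g : ℝ → ℝ := fun u => ((if 0 < 1 + u then (1 + u) ^ a else 0) -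
      (if 0 < u then u ^ a else 0)) ^ 2 with hg
  clear_value F g
  -- Step 1: change of variables x = s - c * u
  have h1 : (∫ x : ℝ, F x) = c * ∫ u : ℝ, F (s - c * u) := by
    have e1 := MeasureTheory.Measure.integral_comp_mul_left (fun y : ℝ => F (s - y)) c
    have e2 : (∫ x : ℝ, F (s - x)) = ∫ x : ℝ, F x :=
      integral_sub_left_eq_self F volume s
    rw [e2] at e1
    rw [e1, smul_eq_mul, abs_of_pos (inv_pos.2 hc0)]
    field_simp
  -- Step 2: pointwise identity F (s - c*u) = (c^a)^2 * g u
  have h2 : ∀ u : ℝ, F (s - c * u) = (c ^ a) ^ 2 * g u := by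
    intro u
    have e1 : t - (s - c * u) = c * (1 + u) := by rw [hc']; ring
    have e2 : s - (s - c * u) = c * u := by ring
    rw [hF, hg]
    simp only [e1, e2]
    have p1 : (0 < c * (1 + u)) ↔ (0 < 1 + u) := by
      constructor
      · intro h; by_contra h'; push_neg at h'; nlinarith
      · intro h; positivity
    have p2 : (0 < c * u) ↔ (0 < u) := by
      constructor
      · intro h; by_contra h'; push_neg at h'; nlinarith
      · intro h; positivity
    rw [if_congr p1 rfl rfl, if_congr p2 rfl rfl]
    by_cases h1u : 0 < 1 + u <;> by_cases h2u : 0 < u <;>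
      simp only [if_pos, if_neg, h1u, h2u, if_true, if_false] <;>
      first
        | (rw [Real.mul_rpow hc0.le (by linarith), Real.mul_rpow hc0.le (by linarith)]; ring)
        | (rw [Real.mul_rpow hc0.le (by linarith)]; ring)
        | ring
        | (exfalso; linarith)
  -- Step 3: integral of g
  have hgIoc : IntegrableOn g (Ioc (-1) 0) := by
    have hbase : IntegrableOn (fun x : ℝ => (1 + x) ^ (a * 2)) (Ioc (-1) 0) := by
      have h0 : IntervalIntegrable (fun u : ℝ => u ^ (a * 2)) volume 0 1 :=
        intervalIntegral.intervalIntegrable_rpow' (by linarith)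
      have := h0.comp_add_left 1
      norm_num at this
      rwa [intervalIntegrable_iff_integrableOn_Ioc_of_le (by norm_num)] at this
    refine hbase.congr_fun (fun x hx => ?_) measurableSet_Ioc
    have h1x : 0 < 1 + x := by linarith [hx.1]
    have h2x : ¬ (0 < x) := not_lt.2 hx.2
    simp only [hg, if_pos h1x, if_neg h2x, sub_zero, mvn_sq_rpow h1x.le]
  have hgIoi : IntegrableOn g (Ioi 0) := by
    refine (mvn_integrable ha1 ha2).congr_fun (fun x hx => ?_) measurableSet_Ioi
    have hx0 : (0:ℝ) < x := hx
    have h1x : (0:ℝ) < 1 + x := by linarith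
    simp only [hg, if_pos hx0, if_pos h1x]
    rw [add_comm 1 x]
  have hsplit : (∫ u : ℝ, g u) = (∫ u in Ioc (-1:ℝ) 0, g u) + ∫ u in Ioi (0:ℝ), g u := by
    rw [← setIntegral_union (Set.Ioc_disjoint_Ioi le_rfl) measurableSet_Ioi hgIoc hgIoi,
      Ioc_union_Ioi_eq_Ioi (by norm_num : (-1:ℝ) ≤ 0)]
    rw [setIntegral_eq_integral_of_forall_compl_eq_zero]
    intro x hx
    simp only [mem_Ioi, not_lt] at hx
    have h1x : ¬ (0 < 1 + x) := by intro h; linarith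
    have h2x : ¬ (0 < x) := by intro h; linarith
    simp [hg, if_neg h1x, if_neg h2x]
  have hIocval : (∫ u in Ioc (-1:ℝ) 0, g u) = 1 / (2 * H) := by
    have e1 : (∫ u in Ioc (-1:ℝ) 0, g u) = ∫ x in Ioc (-1:ℝ) 0, (1 + x) ^ (a * 2) := by
      refine setIntegral_congr_fun measurableSet_Ioc (fun x hx => ?_)
      have h1x : 0 < 1 + x := by linarith [hx.1]
      have h2x : ¬ (0 < x) := not_lt.2 hx.2
      simp only [hg, if_pos h1x, if_neg h2x, sub_zero, mvn_sq_rpow h1x.le]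
    rw [e1, ← intervalIntegral.integral_of_le (by norm_num : (-1:ℝ) ≤ 0)]
    have e2 := intervalIntegral.integral_comp_add_left (a := (-1:ℝ)) (b := 0)
      (fun u : ℝ => u ^ (a * 2)) 1
    norm_num at e2
    rw [e2, integral_rpow (Or.inl (by linarith : (-1:ℝ) < a * 2))]
    rw [Real.one_rpow, Real.zero_rpow (by rw [h2H]; positivity), h2H]
    ring
  have hIoival : (∫ u in Ioi (0:ℝ), g u) =
      ∫ x in Set.Ioi (0:ℝ), ((x+1) ^ a - x ^ a) ^ 2 := by
    refine setIntegral_congr_fun measurableSet_Ioi (fun x hx => ?_)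
    have hx0 : (0:ℝ) < x := hx
    have h1x : (0:ℝ) < 1 + x := by linarith
    simp only [hg, if_pos hx0, if_pos h1x]
    rw [add_comm 1 x]
  -- Put everything together
  calc (∫ x : ℝ, F x) = c * ∫ u : ℝ, F (s - c * u) := h1
    _ = c * ((c ^ a) ^ 2 * ∫ u : ℝ, g u) := by
        rw [show (fun u : ℝ => F (s - c * u)) = fun u => (c ^ a) ^ 2 * g u from funext h2,
          integral_const_mul]
    _ = c ^ (2 * H) * (1 / (2 * H) + ∫ x in Set.Ioi (0:ℝ), ((x+1) ^ a - x ^ a) ^ 2) := by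
        have hpow : c * (c ^ a) ^ 2 = c ^ (2 * H) := by
          rw [mvn_sq_rpow hc0.le, ← Real.rpow_one_add' hc0.le
            (by rw [show (1:ℝ) + a * 2 = 2 * H by linarith]; positivity),
            show (1:ℝ) + a * 2 = 2 * H by linarith]
        rw [hsplit, hIocval, hIoival, ← hpow]
        ring
end

section
/- For every H ∈ (0,1), ∫₀^∞ (1 − cos x) / x^{2H+1} dx = π / (2 Γ(2H + 1) sin(πH)), where Γ denotes the Gamma function. -/
/-!
Since `Γ(s) x^(-s) = ∫₀^∞ t^(s-1) e^(-xt) dt` and the Laplace transform of `1 - cos` is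
`1 / (t (1 + t²))`, Tonelli's theorem gives
`Γ(2H+1) ∫₀^∞ (1 - cos x) x^(-2H-1) dx = ∫₀^∞ t^(2H-1) / (1 + t²) dt`.
Writing `1 / (1 + t²) = ∫₀^∞ e^(-(1+t²)u) du` and exchanging the integrals once more turns the
right-hand side into `Γ(H) Γ(1-H) / 2 = π / (2 sin(πH))`.
-/

open Real MeasureTheory Set Function

theorem lintegral_ofReal_eq_of_integral_kernel {α β : Type*} [MeasurableSpace α]
    [MeasurableSpace β] {μ : Measure α} {ν : Measure β} [SFinite μ] [SFinite ν]
    {k : α → β → ℝ} {f : α → ℝ} {g : β → ℝ} (hk : AEMeasurable (uncurry k) (μ.prod ν))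
    (hf : ∀ᵐ x ∂μ, Integrable (k x) ν ∧ 0 ≤ᵐ[ν] k x ∧ ∫ y, k x y ∂ν = f x)
    (hg : ∀ᵐ y ∂ν, Integrable (k · y) μ ∧ 0 ≤ᵐ[μ] (k · y) ∧ ∫ x, k x y ∂μ = g y) :
    ∫⁻ x, ENNReal.ofReal (f x) ∂μ = ∫⁻ y, ENNReal.ofReal (g y) ∂ν := calc
  _ = ∫⁻ x, ∫⁻ y, ENNReal.ofReal (k x y) ∂ν ∂μ := lintegral_congr_ae <| hf.mono
        fun x ⟨hint, hnn, hval⟩ ↦ by rw [← hval, ofReal_integral_eq_lintegral_ofReal hint hnn]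
  _ = ∫⁻ y, ∫⁻ x, ENNReal.ofReal (k x y) ∂μ ∂ν :=
        lintegral_lintegral_swap (ENNReal.measurable_ofReal.comp_aemeasurable hk)
  _ = _ := lintegral_congr_ae <| hg.mono
        fun y ⟨hint, hnn, hval⟩ ↦ by rw [← hval, ofReal_integral_eq_lintegral_ofReal hint hnn]

theorem integrableOn_exp_neg_mul {t : ℝ} (ht : 0 < t) :
    IntegrableOn (fun x => rexp (-(t * x))) (Ioi 0) := by
  simpa [neg_mul] using exp_neg_integrableOn_Ioi 0 ht

theorem integrableOn_rpow_mul_exp_neg_mul {a r : ℝ} (ha : -1 < a) (hr : 0 < r) :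
    IntegrableOn (fun t => t ^ a * rexp (-(r * t))) (Ioi 0) := by
  simpa [neg_mul] using integrableOn_rpow_mul_exp_neg_mul_rpow ha one_pos hr

theorem exp_neg_mul_mul_cos_eq_re (t x : ℝ) :
    rexp (-(t * x)) * cos x = (Complex.exp ((-t + Complex.I) * x)).re := by
  rw [show ((-t + Complex.I) * x : ℂ) = ((-(t * x) : ℝ) : ℂ) + (x : ℂ) * Complex.I by
    push_cast; ring, Complex.exp_add, ← Complex.ofReal_exp, Complex.re_ofReal_mul,
    Complex.exp_ofReal_mul_I_re]

theorem integrableOn_exp_neg_mul_mul_cos {t : ℝ} (ht : 0 < t) :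
    IntegrableOn (fun x => rexp (-(t * x)) * cos x) (Ioi 0) := by
  simp_rw [exp_neg_mul_mul_cos_eq_re]
  exact (integrableOn_exp_mul_complex_Ioi (by simpa using ht) 0).re

theorem integral_exp_neg_mul_mul_cos {t : ℝ} (ht : 0 < t) :
    ∫ x in Ioi 0, rexp (-(t * x)) * cos x = t / (1 + t ^ 2) := by
  simp_rw [exp_neg_mul_mul_cos_eq_re]
  have hc : (-t + Complex.I).re < 0 := by simpa using ht
  have := integral_re (𝕜 := ℂ) (integrableOn_exp_mul_complex_Ioi hc 0)
  simp only [RCLike.re_to_complex] at this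
  rw [this, integral_exp_mul_complex_Ioi hc, Complex.ofReal_zero, mul_zero, Complex.exp_zero,
    neg_div, ← div_neg, neg_add, neg_neg, one_div, Complex.inv_re, Complex.normSq_apply]
  simp only [Complex.add_re, Complex.ofReal_re, Complex.neg_re, Complex.I_re, neg_zero, add_zero,
    Complex.add_im, Complex.ofReal_im, Complex.neg_im, Complex.I_im, zero_add, mul_neg, mul_one,
    neg_neg]
  ring

theorem integrableOn_one_sub_cos_mul_exp_neg_mul {t : ℝ} (ht : 0 < t) :
    IntegrableOn (fun x => (1 - cos x) * rexp (-(t * x))) (Ioi 0) := by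
  simp_rw [sub_mul, one_mul, mul_comm (cos _)]
  exact (integrableOn_exp_neg_mul ht).sub (integrableOn_exp_neg_mul_mul_cos ht)

theorem integral_one_sub_cos_mul_exp_neg_mul {t : ℝ} (ht : 0 < t) :
    ∫ x in Ioi 0, (1 - cos x) * rexp (-(t * x)) = 1 / (t * (1 + t ^ 2)) := by
  simp_rw [sub_mul, one_mul, mul_comm (cos _)]
  rw [integral_sub (integrableOn_exp_neg_mul ht) (integrableOn_exp_neg_mul_mul_cos ht),
    integral_exp_neg_mul_mul_cos ht]
  simp_rw [← neg_mul]
  rw [integral_exp_mul_Ioi (by linarith), mul_zero, exp_zero]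
  field_simp
  ring

theorem lintegral_Gamma_mul_one_sub_cos_div_rpow {s : ℝ} (hs : 0 < s) :
    ∫⁻ x in Ioi 0, ENNReal.ofReal (Gamma s * ((1 - cos x) / x ^ s)) =
      ∫⁻ t in Ioi 0, ENNReal.ofReal (t ^ (s - 2) / (1 + t ^ 2)) := by
  have hcos (x : ℝ) : 0 ≤ 1 - cos x := sub_nonneg.2 (cos_le_one x)
  refine lintegral_ofReal_eq_of_integral_kernel
    (k := fun x t => (1 - cos x) * (t ^ (s - 1) * rexp (-(x * t))))
    (by fun_prop : Measurable _).aemeasurable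
    (ae_restrict_of_forall_mem measurableSet_Ioi fun x (hx : 0 < x) => ⟨?_, ?_, ?_⟩)
    (ae_restrict_of_forall_mem measurableSet_Ioi fun t (ht : 0 < t) => ?_)
  · exact (integrableOn_rpow_mul_exp_neg_mul (by linarith) hx).const_mul _
  · exact ae_restrict_of_forall_mem measurableSet_Ioi fun t (ht : 0 < t) =>
      mul_nonneg (hcos x) (by positivity)
  · rw [integral_const_mul, integral_rpow_mul_exp_neg_mul_Ioi hs hx, div_rpow zero_le_one hx.le,
      one_rpow]
    ring
  · have hk : (fun x => (1 - cos x) * (t ^ (s - 1) * rexp (-(x * t)))) =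
        fun x => t ^ (s - 1) * ((1 - cos x) * rexp (-(t * x))) := by
      ext x; ring_nf
    simp only [hk]
    refine ⟨(integrableOn_one_sub_cos_mul_exp_neg_mul ht).const_mul _,
      ae_restrict_of_forall_mem measurableSet_Ioi fun x _ => by have := hcos x; positivity, ?_⟩
    rw [integral_const_mul, integral_one_sub_cos_mul_exp_neg_mul ht,
      show s - 2 = s - 1 - 1 by ring, rpow_sub_one ht.ne' (s - 1), mul_one_div, div_div]

theorem lintegral_rpow_div_one_add_sq {b : ℝ} (hb0 : 0 < b) (hb1 : b < 1) :
    ∫⁻ t in Ioi 0, ENNReal.ofReal (t ^ (2 * b - 1) / (1 + t ^ 2)) =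
      ENNReal.ofReal (π / (2 * sin (π * b))) := calc
  _ = ∫⁻ u in Ioi 0, ENNReal.ofReal (Gamma b / 2 * (rexp (-u) * u ^ ((1 - b) - 1))) := by
    refine lintegral_ofReal_eq_of_integral_kernel
      (k := fun t u => t ^ (2 * b - 1) * rexp (-(1 + t ^ 2) * u))
      (by fun_prop : Measurable _).aemeasurable
      (ae_restrict_of_forall_mem measurableSet_Ioi fun t (ht : 0 < t) => ⟨?_, ?_, ?_⟩)
      (ae_restrict_of_forall_mem measurableSet_Ioi fun u (hu : 0 < u) => ?_)
    · exact (exp_neg_integrableOn_Ioi 0 (by positivity)).const_mul _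
    · exact ae_of_all _ fun u => by positivity
    · rw [integral_const_mul, integral_exp_mul_Ioi (by nlinarith) 0, mul_zero, exp_zero,
        neg_div_neg_eq, mul_one_div]
    · have hk : (fun t => t ^ (2 * b - 1) * rexp (-(1 + t ^ 2) * u)) =
          fun t => rexp (-u) * (t ^ (2 * b - 1) * rexp (-u * t ^ (2 : ℝ))) := by
        ext t
        rw [rpow_two, mul_left_comm, ← exp_add]
        ring_nf
      simp only [hk]
      refine ⟨(integrableOn_rpow_mul_exp_neg_mul_rpow (by linarith) two_pos hu).const_mul _,
        ae_restrict_of_forall_mem measurableSet_Ioi fun t (ht : 0 < t) => by positivity, ?_⟩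
      rw [integral_const_mul, integral_rpow_mul_exp_neg_mul_rpow two_pos (by linarith) hu,
        show (2 * b - 1 + 1) / 2 = b by ring, show -(2 * b - 1 + 1) / 2 = 1 - b - 1 by ring]
      ring
  _ = ENNReal.ofReal (Gamma b / 2 * Gamma (1 - b)) := by
    have h1b : 0 < 1 - b := by linarith
    rw [← ofReal_integral_eq_lintegral_ofReal ((GammaIntegral_convergent h1b).const_mul _)
      (ae_restrict_of_forall_mem measurableSet_Ioi fun u (hu : 0 < u) => by positivity),
      integral_const_mul, Gamma_eq_integral h1b]
  _ = _ := by
    rw [div_mul_eq_mul_div, Gamma_mul_Gamma_one_sub, div_div, mul_comm (sin _)]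

/-- `∫₀^∞ (1 - cos x) / x^(2H+1) dx = π / (2 Γ(2H+1) sin(πH))` for `H ∈ (0,1)`. -/
theorem harmonizable_constant (H : ℝ) (hH : H ∈ Set.Ioo (0:ℝ) 1) :
    (∫ x in Set.Ioi (0:ℝ), (1 - Real.cos x) / x ^ (2*H + 1)) =
      π / (2 * Real.Gamma (2*H + 1) * Real.sin (π * H)) := by
  obtain ⟨hH0, hH1⟩ := hH
  have hΓ : 0 < Gamma (2 * H + 1) := Gamma_pos_of_pos (by linarith)
  have hsin : 0 < sin (π * H) := sin_pos_of_pos_of_lt_pi (by positivity) (by nlinarith [pi_pos])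
  have hnn : 0 ≤ᵐ[volume.restrict (Ioi 0)]
      fun x => Gamma (2 * H + 1) * ((1 - cos x) / x ^ (2 * H + 1)) :=
    ae_restrict_of_forall_mem measurableSet_Ioi fun x (hx : 0 < x) =>
      mul_nonneg hΓ.le (div_nonneg (sub_nonneg.2 (cos_le_one x)) (by positivity))
  calc _ = (∫ x in Ioi 0, Gamma (2 * H + 1) * ((1 - cos x) / x ^ (2 * H + 1))) /
        Gamma (2 * H + 1) := by
        rw [integral_const_mul]; field_simp
    _ = π / (2 * sin (π * H)) / Gamma (2 * H + 1) := by
        rw [integral_eq_lintegral_of_nonneg_ae hnn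
            (by fun_prop : Measurable _).aestronglyMeasurable,
          lintegral_Gamma_mul_one_sub_cos_div_rpow (by linarith),
          show 2 * H + 1 - 2 = 2 * H - 1 by ring, lintegral_rpow_div_one_add_sq hH0 hH1,
          ENNReal.toReal_ofReal (by positivity)]
    _ = _ := by field_simp
end

section
/- Let H ∈ (1/2,1), set μ = H − 1/2, and let 0 < u < v. Then ∫₀ᵘ x^{−2μ} (u−x)^{μ−1} (v−x)^{μ−1} dx = u^{−μ} v^{−μ} (v−u)^{2H−2} · B(2−2H, H−1/2), where B(a,b) = Γ(a)Γ(b)/Γ(a+b) is the Beta function. -/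
open Real MeasureTheory

lemma real_beta (a b : ℝ) (ha : 0 < a) (hb : 0 < b) :
    ∫ x in (0:ℝ)..1, x ^ (a-1) * (1-x) ^ (b-1)
      = Real.Gamma a * Real.Gamma b / Real.Gamma (a+b) := by
  have key : Complex.Gamma a * Complex.Gamma b
      = Complex.Gamma (a+b) * Complex.betaIntegral a b := by
    exact Complex.Gamma_mul_Gamma_eq_betaIntegral (s := a) (t := b) (by simp [ha]) (by simp [hb])
  have hbeta : Complex.betaIntegral a b
      = ((∫ x in (0:ℝ)..1, x ^ (a-1) * (1-x) ^ (b-1) : ℝ) : ℂ) := by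
    rw [Complex.betaIntegral, ← intervalIntegral.integral_ofReal]
    refine intervalIntegral.integral_congr fun x hx => ?_
    simp only [Set.uIcc_of_le (zero_le_one' ℝ), Set.mem_Icc] at hx
    rw [show ((a:ℂ)-1) = ((a-1:ℝ):ℂ) by push_cast; ring,
      show ((b:ℂ)-1) = ((b-1:ℝ):ℂ) by push_cast; ring,
      show (1 - (x:ℂ)) = ((1-x:ℝ):ℂ) by push_cast; ring,
      ← Complex.ofReal_cpow hx.1, ← Complex.ofReal_cpow (by linarith [hx.2] : (0:ℝ) ≤ 1-x),
      ← Complex.ofReal_mul]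
  rw [hbeta] at key
  simp only [Complex.Gamma_ofReal, ← Complex.ofReal_add, ← Complex.ofReal_mul] at key
  have := Complex.ofReal_injective key
  have hg : Real.Gamma (a+b) ≠ 0 := (Real.Gamma_pos_of_pos (by linarith)).ne'
  field_simp
  linarith [this]

lemma log_inj' {x y : ℝ} (hx : 0 < x) (hy : 0 < y) (h : Real.log x = Real.log y) : x = y := by
  rw [← Real.exp_log hx, ← Real.exp_log hy, h]

/-- The key integral computation in the Volterra-type representation of fBm for
`H > 1/2`: with `μ = H - 1/2` and `0 < u < v`,
`∫₀ᵘ x^(-2μ) (u-x)^(μ-1) (v-x)^(μ-1) dx = u^(-μ) v^(-μ) (v-u)^(2H-2) B(2-2H, H-1/2)`,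
where `B(a,b) = Γ(a)Γ(b)/Γ(a+b)`. -/
theorem volterra_kernel_integral (H : ℝ) (hH : H ∈ Set.Ioo (1/2 : ℝ) 1)
    (u v : ℝ) (hu : 0 < u) (huv : u < v) :
    (∫ x in (0:ℝ)..u,
        x ^ (-(2 * (H - 1/2))) * (u - x) ^ ((H - 1/2) - 1) * (v - x) ^ ((H - 1/2) - 1)) =
      u ^ (-(H - 1/2)) * v ^ (-(H - 1/2)) * (v - u) ^ (2*H - 2) *
        (Real.Gamma (2 - 2*H) * Real.Gamma (H - 1/2)
          / Real.Gamma ((2 - 2*H) + (H - 1/2))) := by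
  obtain ⟨h1, h2⟩ := hH
  set μ : ℝ := H - 1/2 with hμdef
  have hμ0 : 0 < μ := by simp [hμdef]; linarith
  have hμ1 : μ < 1/2 := by simp [hμdef]; linarith
  have hv : 0 < v := hu.trans huv
  have hvu : 0 < v - u := by linarith
  set f : ℝ → ℝ := fun z => u * v * (1 - z) / (v - u * z) with hf
  set f' : ℝ → ℝ := fun z => -(u * v * (v - u)) / (v - u * z) ^ 2 with hf'
  have hw : ∀ z ∈ Set.Ioo (0:ℝ) 1, 0 < v - u * z := by
    intro z hz
    nlinarith [hz.1, hz.2]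
  -- derivative
  have hderiv : ∀ z ∈ Set.Ioo (0:ℝ) 1, HasDerivWithinAt f (f' z) (Set.Ioo 0 1) z := by
    intro z hz
    have hwz := hw z hz
    have : HasDerivAt f (((-(u*v)) * (v - u*z) - (u * v * (1 - z)) * (-u)) / (v - u*z)^2) z := by
      apply HasDerivAt.div
      · simpa using ((hasDerivAt_id z).const_sub 1).const_mul (u*v)
      · simpa using ((hasDerivAt_id z).const_mul u).const_sub v
      · exact hwz.ne'
    have heq : ((-(u*v)) * (v - u*z) - (u * v * (1 - z)) * (-u)) / (v - u*z)^2 = f' z := by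
      rw [hf']
      field_simp
      ring
    exact (heq ▸ this).hasDerivWithinAt
  -- injectivity
  have hinj : Set.InjOn f (Set.Ioo 0 1) := by
    intro z1 hz1 z2 hz2 hfz
    have hw1 := hw z1 hz1
    have hw2 := hw z2 hz2
    rw [hf, div_eq_div_iff hw1.ne' hw2.ne'] at hfz
    rcases lt_trichotomy z1 z2 with h | h | h
    · nlinarith [mul_pos (mul_pos (mul_pos hu hv) hvu) (sub_pos.2 h)]
    · exact h
    · nlinarith [mul_pos (mul_pos (mul_pos hu hv) hvu) (sub_pos.2 h)]
  -- image
  have himg : f '' Set.Ioo 0 1 = Set.Ioo 0 u := by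
    ext x
    constructor
    · rintro ⟨z, hz, rfl⟩
      have hwz := hw z hz
      constructor
      · exact div_pos (mul_pos (mul_pos hu hv) (by linarith [hz.2]) : (0:ℝ) < u * v * (1 - z)) hwz
      · show u * v * (1 - z) / (v - u * z) < u
        rw [div_lt_iff₀ hwz]
        nlinarith [mul_pos (mul_pos hu hvu) hz.1]
    · intro hx
      have hvx : 0 < v - x := by linarith [hx.2]
      refine ⟨v * (u - x) / (u * (v - x)), ⟨?_, ?_⟩, ?_⟩
      · apply div_pos
        · nlinarith [hx.2]
        · positivity
      · rw [div_lt_one (by positivity)]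
        nlinarith [hx.1]
      · have hg1 : 1 - v * (u - x) / (u * (v - x)) = x * (v - u) / (u * (v - x)) := by
          field_simp
          ring
        have hg2 : v - u * (v * (u - x) / (u * (v - x))) = v * (v - u) / (v - x) := by
          field_simp
          ring
        rw [hf]
        simp only [hg1, hg2]
        rw [div_eq_iff (by positivity)]
        field_simp
  have key := MeasureTheory.integral_image_eq_integral_abs_deriv_smul measurableSet_Ioo hderiv
      hinj (fun x => x ^ (-(2*μ)) * (u - x) ^ (μ-1) * (v - x) ^ (μ-1))
  rw [himg] at key
  have expand : ∀ a b c d : ℝ, 0 < a → 0 < b → 0 < c → 0 < d →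
      Real.log (a*b*c/d) = Real.log a + Real.log b + Real.log c - Real.log d := by
    intro a b c d ha hb hc hd
    rw [Real.log_div (by positivity) hd.ne', Real.log_mul (by positivity) hc.ne',
      Real.log_mul ha.ne' hb.ne']
  have hptwise : ∫ z in Set.Ioo (0:ℝ) 1,
        |f' z| • ((f z) ^ (-(2*μ)) * (u - f z) ^ (μ-1) * (v - f z) ^ (μ-1))
      = ∫ z in Set.Ioo (0:ℝ) 1,
        (u ^ (-μ) * v ^ (-μ) * (v-u) ^ (2*H-2)) * (z ^ (μ-1) * (1-z) ^ ((1-2*μ)-1)) := by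
    refine MeasureTheory.setIntegral_congr_fun measurableSet_Ioo fun z hz => ?_
    have hz0 : (0:ℝ) < z := hz.1
    have h1z : (0:ℝ) < 1 - z := by linarith [hz.2]
    have hwz : 0 < v - u * z := hw z hz
    have e1 : f z = u*v*(1-z)/(v - u*z) := rfl
    have e2 : u - f z = u*z*(v-u)/(v - u*z) := by
      simp only [hf]; field_simp; ring
    have e3 : v - f z = v*(v-u)/(v - u*z) := by
      simp only [hf]; field_simp; ring
    have e4 : |f' z| = u*v*(v-u)/(v - u*z)^2 := by
      simp only [hf']
      rw [abs_div, abs_neg, abs_of_pos (by positivity : (0:ℝ) < u*v*(v-u)),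
        abs_of_pos (by positivity : (0:ℝ) < (v - u*z)^2)]
    rw [smul_eq_mul, e4, e1, e2, e3]
    have hA : (0:ℝ) < u*v*(1-z)/(v - u*z) := by positivity
    have hB : (0:ℝ) < u*z*(v-u)/(v - u*z) := by positivity
    have hC : (0:ℝ) < v*(v-u)/(v - u*z) := by positivity
    have hW : (0:ℝ) < u*v*(v-u)/(v - u*z)^2 := by positivity
    have hAp : (0:ℝ) < (u*v*(1-z)/(v - u*z)) ^ (-(2*μ)) := Real.rpow_pos_of_pos hA _
    have hBq : (0:ℝ) < (u*z*(v-u)/(v - u*z)) ^ (μ-1) := Real.rpow_pos_of_pos hB _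
    have hCq : (0:ℝ) < (v*(v-u)/(v - u*z)) ^ (μ-1) := Real.rpow_pos_of_pos hC _
    have hup : (0:ℝ) < u ^ (-μ) := Real.rpow_pos_of_pos hu _
    have hvp : (0:ℝ) < v ^ (-μ) := Real.rpow_pos_of_pos hv _
    have hvup : (0:ℝ) < (v-u) ^ (2*H-2) := Real.rpow_pos_of_pos hvu _
    have hzp : (0:ℝ) < z ^ (μ-1) := Real.rpow_pos_of_pos hz0 _
    have h1zp : (0:ℝ) < (1-z) ^ ((1-2*μ)-1) := Real.rpow_pos_of_pos h1z _
    apply log_inj' (by positivity) (by positivity)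
    rw [Real.log_mul hW.ne' (by positivity : (0:ℝ) < _ * _ * _).ne',
      Real.log_mul (mul_pos hAp hBq).ne' hCq.ne', Real.log_mul hAp.ne' hBq.ne',
      Real.log_mul (by positivity : (0:ℝ) < u ^ (-μ) * v ^ (-μ) * (v-u) ^ (2*H-2)).ne'
        (mul_pos hzp h1zp).ne',
      Real.log_mul (mul_pos hup hvp).ne' hvup.ne', Real.log_mul hup.ne' hvp.ne',
      Real.log_mul hzp.ne' h1zp.ne',
      Real.log_rpow hA, Real.log_rpow hB, Real.log_rpow hC, Real.log_rpow hu,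
      Real.log_rpow hv, Real.log_rpow hvu, Real.log_rpow hz0, Real.log_rpow h1z,
      expand u v (1-z) (v - u*z) hu hv h1z hwz,
      expand u z (v-u) (v - u*z) hu hz0 hvu hwz,
      show v*(v-u)/(v-u*z) = 1*v*(v-u)/(v-u*z) by ring,
      expand 1 v (v-u) (v - u*z) one_pos hv hvu hwz,
      show u*v*(v-u)/(v-u*z)^2 = u*v*(v-u)/((v-u*z)*(v-u*z)) by ring,
      expand u v (v-u) ((v-u*z)*(v-u*z)) hu hv hvu (by positivity),
      Real.log_mul hwz.ne' hwz.ne', Real.log_one]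
    rw [hμdef]
    ring
  rw [intervalIntegral.integral_of_le hu.le, MeasureTheory.integral_Ioc_eq_integral_Ioo,
    key, hptwise, MeasureTheory.integral_const_mul,
    ← MeasureTheory.integral_Ioc_eq_integral_Ioo,
    ← intervalIntegral.integral_of_le (zero_le_one' ℝ),
    real_beta μ (1-2*μ) hμ0 (by simp only [hμdef]; linarith)]
  rw [show (1-2*μ) = 2-2*H by rw [hμdef]; ring, show μ + (2-2*H) = 2-2*H + μ by ring]
  ring
end

section
/- Let H ∈ (0,1), r ≥ 1, and let a₀, …, a_q be real numbers satisfying Σ_{k=0}^q a_k k^i = 0 for every i = 0, 1, …, r−1 (a filter of order r). Then the function n ↦ ρ_H^a(n) = −(1/2) Σ_{k=0}^q Σ_{j=0}^q a_k a_j |n + k − j|^{2H} is O(n^{2H − 2r}) as n → ∞ along the natural numbers. -/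
open Real Asymptotics Filter

/-! The double filter `∑ₖ ∑ⱼ aₖ aⱼ f (x + k - j)` of a filter of order `r` annihilates every
polynomial of degree `< 2r`: in the binomial expansion of `(k + (x - j)) ^ i` each term carries a
moment of order `< r`, either of `k` or of `x - j`. Replacing `f y = y ^ (2H)` by its Taylor
remainder of degree `2r - 1` at `n - q - 1` thus leaves the double sum unchanged, and each remainder
is at most `sup |f⁽²ʳ⁾| (2q + 1) ^ (2r)` on `[n - q - 1, n + q]`, where `f⁽²ʳ⁾ y` is a constant
times `y ^ (2H - 2r)` and `y` is within a factor `2` of `n`. -/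

open Finset Set
open scoped Nat

lemma abs_sum_sum_mul_mul_le {ι : Type*} (s : Finset ι) (a : ι → ℝ) (g : ι → ι → ℝ) {M : ℝ}
    (hg : ∀ k ∈ s, ∀ j ∈ s, |g k j| ≤ M) :
    |∑ k ∈ s, ∑ j ∈ s, a k * a j * g k j| ≤ (∑ k ∈ s, |a k|) ^ 2 * M := by
  calc |∑ k ∈ s, ∑ j ∈ s, a k * a j * g k j|
      ≤ ∑ k ∈ s, ∑ j ∈ s, |a k * a j * g k j| :=
        (abs_sum_le_sum_abs _ _).trans (sum_le_sum fun k _ => abs_sum_le_sum_abs _ _)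
    _ ≤ ∑ k ∈ s, ∑ j ∈ s, |a k| * |a j| * M := by
        gcongr with k hk j hj
        rw [abs_mul, abs_mul]
        exact mul_le_mul_of_nonneg_left (hg k hk j hj) (by positivity)
    _ = (∑ k ∈ s, |a k|) ^ 2 * M := by
        rw [sq, sum_mul_sum, sum_mul]
        simp only [sum_mul]

lemma rpow_le_two_rpow_abs_mul_rpow {x y : ℝ} (e : ℝ) (hx : 0 < x) (hxy : x / 2 ≤ y)
    (hyx : y ≤ 2 * x) : y ^ e ≤ 2 ^ |e| * x ^ e := by
  rcases le_or_gt 0 e with he | he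
  · calc y ^ e ≤ (2 * x) ^ e := rpow_le_rpow (by linarith) hyx he
      _ = 2 ^ |e| * x ^ e := by rw [mul_rpow zero_le_two hx.le, abs_of_nonneg he]
  · calc y ^ e ≤ (x / 2) ^ e := rpow_le_rpow_of_nonpos (by positivity) hxy he.le
      _ = 2 ^ |e| * x ^ e := by
        rw [div_rpow hx.le zero_le_two, abs_of_neg he, rpow_neg zero_le_two, div_eq_inv_mul]

lemma iteratedDerivWithin_rpow_const_Icc {p A B y : ℝ} (n : ℕ) (hA : 0 < A) (hAB : A < B)
    (hy : y ∈ Icc A B) :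
    iteratedDerivWithin n (fun x : ℝ => x ^ p) (Icc A B) y
      = (descPochhammer ℝ n).eval p * y ^ (p - n) := by
  rw [iteratedDerivWithin_eq_iteratedDeriv (uniqueDiffOn_Icc hAB)
    (contDiffAt_rpow_const_of_ne (hA.trans_le hy.1).ne') hy, iteratedDeriv_eq_iterate,
    iter_deriv_rpow_const]

def IsFilterOfOrder (q r : ℕ) (a : ℕ → ℝ) : Prop :=
  ∀ i < r, ∑ k ∈ range (q + 1), a k * (k : ℝ) ^ i = 0

namespace IsFilterOfOrder

variable {q r : ℕ} {a : ℕ → ℝ}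

lemma sum_mul_sub_pow_eq_zero (ha : IsFilterOfOrder q r a) (x : ℝ) {p : ℕ} (hp : p < r) :
    ∑ j ∈ range (q + 1), a j * (x - j) ^ p = 0 := by
  have hexpand : ∀ j, a j * (x - j) ^ p
      = ∑ l ∈ range (p + 1), x ^ l * (-1) ^ (p - l) * p.choose l * (a j * (j : ℝ) ^ (p - l)) := by
    intro j
    rw [sub_eq_add_neg, add_pow, mul_sum]
    refine sum_congr rfl fun l _ => ?_
    rw [neg_pow]
    ring
  simp_rw [hexpand]
  rw [sum_comm]
  refine sum_eq_zero fun l _ => ?_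
  rw [← mul_sum, ha (p - l) (by omega), mul_zero]

lemma sum_sum_mul_add_sub_pow_eq_zero (ha : IsFilterOfOrder q r a) (x : ℝ) {i : ℕ}
    (hi : i < 2 * r) :
    ∑ k ∈ range (q + 1), ∑ j ∈ range (q + 1), a k * a j * (x + k - j) ^ i = 0 := by
  have hexpand : ∀ k j, a k * a j * (x + k - j) ^ i
      = ∑ m ∈ range (i + 1), i.choose m * (a k * (k : ℝ) ^ m) * (a j * (x - j) ^ (i - m)) := by
    intro k j
    rw [show x + k - j = k + (x - j) by ring, add_pow, mul_sum]
    refine sum_congr rfl fun m _ => ?_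
    ring
  calc ∑ k ∈ range (q + 1), ∑ j ∈ range (q + 1), a k * a j * (x + k - j) ^ i
      = ∑ m ∈ range (i + 1), i.choose m * (∑ k ∈ range (q + 1), a k * (k : ℝ) ^ m) *
          ∑ j ∈ range (q + 1), a j * (x - j) ^ (i - m) := by
        simp_rw [hexpand, mul_sum, sum_mul]
        exact ((sum_congr rfl fun k _ => sum_comm).trans sum_comm).trans
          (sum_congr rfl fun m _ => sum_comm)
    _ = 0 := by
        refine sum_eq_zero fun m hm => ?_
        rcases lt_or_ge m r with hmr | hmr
        · rw [ha m hmr, mul_zero, zero_mul]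
        · rw [ha.sum_mul_sub_pow_eq_zero x (by simp at hm; omega), mul_zero]

lemma sum_sum_mul_taylorWithinEval_eq_zero (ha : IsFilterOfOrder q r a) (f : ℝ → ℝ) (s : Set ℝ)
    (x₀ x : ℝ) {n : ℕ} (hn : n < 2 * r) :
    ∑ k ∈ range (q + 1), ∑ j ∈ range (q + 1),
      a k * a j * taylorWithinEval f n s x₀ (x + k - j) = 0 := by
  have hexpand : ∀ k j : ℕ, a k * a j * taylorWithinEval f n s x₀ (x + k - j)
      = ∑ i ∈ range (n + 1), ((i ! : ℝ)⁻¹ * iteratedDerivWithin i f s x₀) *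
          (a k * a j * (x - x₀ + k - j) ^ i) := by
    intro k j
    rw [taylor_within_apply, mul_sum]
    refine sum_congr rfl fun i _ => ?_
    rw [smul_eq_mul, show x + k - j - x₀ = x - x₀ + k - j by ring]
    ring
  simp_rw [hexpand]
  rw [(sum_congr rfl fun k _ => sum_comm).trans sum_comm]
  refine sum_eq_zero fun i hi => ?_
  simp_rw [← mul_sum]
  rw [ha.sum_sum_mul_add_sub_pow_eq_zero _ (by simp at hi; omega), mul_zero]

lemma abs_sum_sum_mul_le_of_iteratedDerivWithin_le (ha : IsFilterOfOrder q r a) (hr : 1 ≤ r)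
    {f : ℝ → ℝ} {A B C x : ℝ} (hf : ContDiffOn ℝ (2 * r : ℕ) f (Icc A B))
    (hC : ∀ y ∈ Icc A B, ‖iteratedDerivWithin (2 * r) f (Icc A B) y‖ ≤ C)
    (hA : A ≤ x - q) (hB : x + q ≤ B) :
    |∑ k ∈ range (q + 1), ∑ j ∈ range (q + 1), a k * a j * f (x + k - j)|
      ≤ (∑ k ∈ range (q + 1), |a k|) ^ 2 * (C * (B - A) ^ (2 * r)) := by
  obtain ⟨m, hm⟩ : ∃ m, 2 * r = m + 1 := ⟨2 * r - 1, by omega⟩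
  rw [hm] at hf hC ⊢
  have hAB : A ≤ B := by linarith [(Nat.cast_nonneg q : (0 : ℝ) ≤ q)]
  have hC0 : 0 ≤ C := (norm_nonneg _).trans (hC A (left_mem_Icc.2 hAB))
  have hT := ha.sum_sum_mul_taylorWithinEval_eq_zero f (Icc A B) A x (n := m) (by omega)
  set T := taylorWithinEval f m (Icc A B) A
  have hsplit : ∑ k ∈ range (q + 1), ∑ j ∈ range (q + 1), a k * a j * f (x + k - j)
      = ∑ k ∈ range (q + 1), ∑ j ∈ range (q + 1), a k * a j * (f (x + k - j) - T (x + k - j)) := by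
    simp only [mul_sub, sum_sub_distrib, hT, sub_zero]
  rw [hsplit]
  refine abs_sum_sum_mul_mul_le _ _ _ fun k hk j hj => ?_
  have hk' : (k : ℝ) ≤ q := by exact_mod_cast Nat.lt_succ_iff.1 (mem_range.1 hk)
  have hj' : (j : ℝ) ≤ q := by exact_mod_cast Nat.lt_succ_iff.1 (mem_range.1 hj)
  have hxkj : x + k - j ∈ Icc A B := ⟨by linarith [(Nat.cast_nonneg k : (0 : ℝ) ≤ k)],
    by linarith [(Nat.cast_nonneg j : (0 : ℝ) ≤ j)]⟩
  calc |f (x + k - j) - T (x + k - j)|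
      ≤ C * (x + k - j - A) ^ (m + 1) / m ! := taylor_mean_remainder_bound hAB hf hxkj hC
    _ ≤ C * (x + k - j - A) ^ (m + 1) :=
        div_le_self (mul_nonneg hC0 (pow_nonneg (by linarith [hxkj.1]) _))
          (by exact_mod_cast m.factorial_pos)
    _ ≤ C * (B - A) ^ (m + 1) := by
        gcongr
        · linarith [hxkj.1]
        · linarith [hxkj.2]

lemma isBigO_sum_sum_mul_abs_rpow (ha : IsFilterOfOrder q r a) (hr : 1 ≤ r) (p : ℝ) :
    (fun x : ℝ => ∑ k ∈ range (q + 1), ∑ j ∈ range (q + 1), a k * a j * |x + k - j| ^ p)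
      =O[atTop] (fun x : ℝ => x ^ (p - 2 * r)) := by
  set D := ‖(descPochhammer ℝ (2 * r)).eval p‖
  rw [isBigO_iff]
  refine ⟨(∑ k ∈ range (q + 1), |a k|) ^ 2 * (D * 2 ^ |p - 2 * r| * (2 * q + 1) ^ (2 * r)), ?_⟩
  filter_upwards [eventually_ge_atTop (2 * q + 2 : ℝ)] with x hx
  have hA : 0 < x - q - 1 := by linarith
  have hAB : x - q - 1 < x + q := by linarith
  have hf : ContDiffOn ℝ (2 * r : ℕ) (fun y : ℝ => y ^ p) (Icc (x - q - 1) (x + q)) :=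
    fun y hy => (contDiffAt_rpow_const_of_ne (hA.trans_le hy.1).ne').contDiffWithinAt
  have hC : ∀ y ∈ Icc (x - q - 1) (x + q),
      ‖iteratedDerivWithin (2 * r) (fun y : ℝ => y ^ p) (Icc (x - q - 1) (x + q)) y‖
        ≤ D * (2 ^ |p - 2 * r| * x ^ (p - 2 * r)) := by
    intro y hy
    rw [iteratedDerivWithin_rpow_const_Icc _ hA hAB hy, norm_mul,
      norm_of_nonneg (rpow_nonneg (hA.le.trans hy.1) _)]
    push_cast
    exact mul_le_mul_of_nonneg_left (rpow_le_two_rpow_abs_mul_rpow _ (by linarith)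
      (by linarith [hy.1]) (by linarith [hy.2])) (norm_nonneg _)
  have habs : ∑ k ∈ range (q + 1), ∑ j ∈ range (q + 1), a k * a j * |x + k - j| ^ p
      = ∑ k ∈ range (q + 1), ∑ j ∈ range (q + 1), a k * a j * (x + k - j) ^ p := by
    refine sum_congr rfl fun k _ => sum_congr rfl fun j hj => ?_
    have hj' : (j : ℝ) ≤ q := by exact_mod_cast Nat.lt_succ_iff.1 (mem_range.1 hj)
    rw [abs_of_pos (by linarith [(Nat.cast_nonneg k : (0 : ℝ) ≤ k)])]
  rw [norm_of_nonneg (rpow_nonneg (by linarith) _), Real.norm_eq_abs, habs]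
  calc _ ≤ (∑ k ∈ range (q + 1), |a k|) ^ 2 *
        (D * (2 ^ |p - 2 * r| * x ^ (p - 2 * r)) * (x + q - (x - q - 1)) ^ (2 * r)) :=
        ha.abs_sum_sum_mul_le_of_iteratedDerivWithin_le hr hf hC (by linarith) le_rfl
    _ = _ := by ring

end IsFilterOfOrder

theorem filtered_fbm_covariance_decay_general (H : ℝ)
    (r : ℕ) (hr : 1 ≤ r) (q : ℕ) (a : ℕ → ℝ)
    (ha : ∀ i : ℕ, i < r → ∑ k ∈ Finset.range (q+1), a k * (k:ℝ) ^ i = 0) :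
    (fun n : ℕ => -(1/2) * ∑ k ∈ Finset.range (q+1), ∑ j ∈ Finset.range (q+1),
        a k * a j * |(n:ℝ) + k - j| ^ (2*H)) =O[atTop]
      (fun n : ℕ => (n:ℝ) ^ (2*H - 2*r)) :=
  ((IsFilterOfOrder.isBigO_sum_sum_mul_abs_rpow ha hr (2 * H)).comp_tendsto
    tendsto_natCast_atTop_atTop).const_mul_left _

/-- For a filter `a₀,…,a_q` of order `r ≥ 1` (i.e. `Σ_k a_k k^i = 0` for
`i = 0,…,r-1`), the covariance `ρ_H^a(n) = -(1/2) Σ_k Σ_j a_k a_j |n+k-j|^(2H)`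
of the filtered fBm observations is `O(n^(2H-2r))` as `n → ∞`. -/
theorem filtered_fbm_covariance_decay (H : ℝ) (hH : H ∈ Set.Ioo (0:ℝ) 1)
    (r : ℕ) (hr : 1 ≤ r) (q : ℕ) (a : ℕ → ℝ)
    (ha : ∀ i : ℕ, i < r → ∑ k ∈ Finset.range (q+1), a k * (k:ℝ) ^ i = 0) :
    (fun n : ℕ => -(1/2) * ∑ k ∈ Finset.range (q+1), ∑ j ∈ Finset.range (q+1),
        a k * a j * |(n:ℝ) + k - j| ^ (2*H)) =O[atTop]
      (fun n : ℕ => (n:ℝ) ^ (2*H - 2*r)) :=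
  filtered_fbm_covariance_decay_general H r hr q a ha
end
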